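/- arXiv:math/0611130 — 2 statements merged into one kernel-verified Lean document; each statement's English description precedes it below -/
import Mathlib

section
/- Let μ be an atomless Borel probability measure on ℝ and μ^6 the product measure on (Fin 6 → ℝ). Let A = { x | x 0 < x 1 ∧ x 2 < x 1 ∧ x 3 < x 4 ∧ x 5 < x 4 ∧ ¬(x 1 < x 2 ∧ x 3 < x 2) ∧ ¬(x 2 < x 3 ∧ x 4 < x 3) } (local maxima at positions 1 and 4 and at no position in between) and B = { x | x 0 < x 1 ∧ x 2 < x 1 }. Then μ^6(A) / μ^6(B) = 1/3; i.e. f_m(3) = 1/3. -/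
/-!
Ties between i.i.d. coordinates drawn from an atomless law have probability zero, so almost every
sample `x` lies in exactly one of the `n!` cells `{x | x ∘ σ strictly increasing}`, `σ` a
permutation. Permuting coordinates preserves the product measure and permutes the cells, so each
cell has probability `1 / n!`. An event that only depends on the relative order of the coordinates
is, up to a null set, a union of cells, and its probability is the number of admissible orderings
divided by `n!`. For the two events of the theorem these counts are `80` and `240` out of `720`.
-/

open MeasureTheory Set Function
open scoped ENNReal Nat

namespace MeasureTheory.Measure

variable {α : Type*} [MeasurableSpace α] [MeasurableEq α]

lemma prod_diagonal_eq_zero (μ ν : Measure α) [SFinite ν] [NullSingletonClass ν] :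
    μ.prod ν (diagonal α) = 0 := by
  have hfiber (a : α) : Prod.mk a ⁻¹' diagonal α = {a} := by
    ext b
    simp [eq_comm]
  simp [prod_apply measurableSet_diagonal, hfiber]

lemma pi_setOf_eval_eq_eval_eq_zero {ι : Type*} [Fintype ι] (μ : Measure α)
    [IsProbabilityMeasure μ] [NullSingletonClass μ] {i j : ι} (hij : i ≠ j) :
    Measure.pi (fun _ : ι => μ) {x | x i = x j} = 0 := by
  set ν := Measure.pi fun _ : ι => μ
  have hindep : ProbabilityTheory.IndepFun (fun x : ι → α => x i) (fun x => x j) ν :=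
    (ProbabilityTheory.iIndepFun_pi (X := fun _ => id) fun _ => aemeasurable_id).indepFun hij
  have hlaw : ν.map (fun x => (x i, x j)) = μ.prod μ := by
    rw [hindep.map_prod_eq_prod_map_map (measurable_pi_apply i).aemeasurable
      (measurable_pi_apply j).aemeasurable, (measurePreserving_eval _ i).map_eq,
      (measurePreserving_eval _ j).map_eq]
  have hmeas : Measurable fun x : ι → α => (x i, x j) :=
    (measurable_pi_apply i).prodMk (measurable_pi_apply j)
  rw [← prod_diagonal_eq_zero μ μ, ← hlaw, map_apply hmeas measurableSet_diagonal]
  rfl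

lemma ae_pi_injective {ι : Type*} [Fintype ι] (μ : Measure α)
    [IsProbabilityMeasure μ] [NullSingletonClass μ] :
    ∀ᵐ x ∂Measure.pi (fun _ : ι => μ), Injective x := by
  have hpair (i j : ι) : ∀ᵐ x ∂Measure.pi (fun _ : ι => μ), x i = x j → i = j := by
    by_cases hij : i = j
    · exact Filter.Eventually.of_forall fun _ _ => hij
    · simpa [ae_iff, hij] using pi_setOf_eval_eq_eval_eq_zero μ hij
  filter_upwards [ae_all_iff.2 fun i => ae_all_iff.2 (hpair i)] with x hx i j
  exact hx i j

end MeasureTheory.Measure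

section OrderCell

variable {n : ℕ}

def orderCell (σ : Equiv.Perm (Fin n)) : Set (Fin n → ℝ) := {x | StrictMono (x ∘ σ)}

lemma measurableSet_orderCell (σ : Equiv.Perm (Fin n)) : MeasurableSet (orderCell σ) := by
  have : orderCell σ = ⋂ (a : Fin n) (b : Fin n) (_ : a < b), {x | x (σ a) < x (σ b)} := by
    ext x
    simp [orderCell, StrictMono]
  rw [this]
  exact .iInter fun a => .iInter fun b => .iInter fun _ =>
    measurableSet_lt (measurable_pi_apply _) (measurable_pi_apply _)

lemma sort_eq_of_mem_orderCell {σ : Equiv.Perm (Fin n)} {x : Fin n → ℝ}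
    (hx : x ∈ orderCell σ) : Tuple.sort x = σ :=
  (Tuple.eq_sort_iff.2
    ⟨hx.monotone, fun _ _ hij hx' => ((hx.injective hx').not_lt hij).elim⟩).symm

lemma pairwise_disjoint_orderCell : Pairwise (Disjoint on (orderCell (n := n))) :=
  fun _ _ hστ => Set.disjoint_left.2 fun _ hσ hτ =>
    hστ ((sort_eq_of_mem_orderCell hσ).symm.trans (sort_eq_of_mem_orderCell hτ))

lemma mem_orderCell_sort {x : Fin n → ℝ} (hx : Injective x) :
    x ∈ orderCell (Tuple.sort x) :=
  (Tuple.monotone_sort x).strictMono_of_injective (hx.comp (Tuple.sort x).injective)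

lemma onFun_lt_eq_of_mem_orderCell {σ : Equiv.Perm (Fin n)} {x : Fin n → ℝ}
    (hx : x ∈ orderCell σ) : ((· < ·) on x) = ((· < ·) on σ.symm) := by
  ext a b
  simpa using hx.lt_iff_lt (a := σ.symm a) (b := σ.symm b)


lemma measure_orderCell_eq_measure_orderCell_one (μ : Measure ℝ) [SigmaFinite μ]
    (σ : Equiv.Perm (Fin n)) :
    Measure.pi (fun _ => μ) (orderCell σ) =
      Measure.pi (fun _ => μ) (orderCell (1 : Equiv.Perm (Fin n))) := by
  have hpres := measurePreserving_piCongrLeft (fun _ : Fin n => μ) σ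
  rw [← hpres.measure_preimage_equiv]
  congr 1
  ext x
  have hcomp : Equiv.piCongrLeft (fun _ => ℝ) σ x ∘ σ = x := by
    ext i
    simp
  simp [orderCell, MeasurableEquiv.coe_piCongrLeft, hcomp]

lemma measure_compl_iUnion_orderCell (μ : Measure ℝ) [IsProbabilityMeasure μ]
    [NullSingletonClass μ] :
    Measure.pi (fun _ : Fin n => μ) (⋃ σ, orderCell σ)ᶜ = 0 :=
  measure_mono_null (fun x hx => by
      by_contra hinj
      exact hx (mem_iUnion.2 ⟨_, mem_orderCell_sort (not_not.1 hinj)⟩))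
    (Measure.ae_pi_injective μ)

lemma measure_orderCell (μ : Measure ℝ) [IsProbabilityMeasure μ] [NullSingletonClass μ]
    (σ : Equiv.Perm (Fin n)) :
    Measure.pi (fun _ => μ) (orderCell σ) = (n ! : ℝ≥0∞)⁻¹ := by
  have hsum : ∑ τ : Equiv.Perm (Fin n), Measure.pi (fun _ => μ) (orderCell τ) = 1 := by
    rw [← tsum_fintype (L := .unconditional _),
      ← measure_iUnion pairwise_disjoint_orderCell measurableSet_orderCell,
      ← prob_compl_eq_zero_iff (.iUnion measurableSet_orderCell)]
    exact measure_compl_iUnion_orderCell μ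
  simp only [measure_orderCell_eq_measure_orderCell_one μ, Finset.sum_const, Finset.card_univ,
    Fintype.card_perm, Fintype.card_fin, nsmul_eq_mul] at hsum ⊢
  exact ENNReal.eq_inv_of_mul_eq_one_left (by rwa [mul_comm])

theorem measure_setOf_order_pattern (μ : Measure ℝ) [IsProbabilityMeasure μ]
    [NullSingletonClass μ] (P : (Fin n → Fin n → Prop) → Prop) :
    Measure.pi (fun _ => μ) {x | P fun a b => x a < x b} =
      Nat.card {σ : Equiv.Perm (Fin n) // P fun a b => σ.symm a < σ.symm b} / n ! := by
  classical
  set Q : Equiv.Perm (Fin n) → Prop := fun σ => P fun a b => σ.symm a < σ.symm b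
  have hcells : {x : Fin n → ℝ | P fun a b => x a < x b} ∩ ⋃ σ, orderCell σ =
      ⋃ σ ∈ Finset.univ.filter Q, orderCell σ := by
    ext x
    simp only [mem_inter_iff, mem_iUnion, Finset.mem_filter, Finset.mem_univ, true_and]
    constructor
    · rintro ⟨hP, σ, hσ⟩
      exact ⟨σ, (congrArg P (onFun_lt_eq_of_mem_orderCell hσ)).mp hP, hσ⟩
    · rintro ⟨σ, hQ, hσ⟩
      exact ⟨(congrArg P (onFun_lt_eq_of_mem_orderCell hσ)).mpr hQ, σ, hσ⟩
  rw [← measure_inter_conull (measure_compl_iUnion_orderCell μ), hcells,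
    measure_biUnion_finset (pairwise_disjoint_orderCell.set_pairwise _)
      fun σ _ => measurableSet_orderCell σ]
  simp only [measure_orderCell μ, Finset.sum_const, nsmul_eq_mul, div_eq_mul_inv,
    Nat.card_eq_fintype_card, Fintype.card_subtype]

end OrderCell

theorem fm_three_eq_one_third
    (μ : Measure ℝ) [IsProbabilityMeasure μ] [NullSingletonClass μ] :
    (Measure.pi fun _ : Fin 6 => μ)
        {x | x 0 < x 1 ∧ x 2 < x 1 ∧ x 3 < x 4 ∧ x 5 < x 4 ∧
             ¬(x 1 < x 2 ∧ x 3 < x 2) ∧ ¬(x 2 < x 3 ∧ x 4 < x 3)} /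
      (Measure.pi fun _ : Fin 6 => μ) {x | x 0 < x 1 ∧ x 2 < x 1} = 1 / 3 := by
  rw [measure_setOf_order_pattern μ
      fun r => r 0 1 ∧ r 2 1 ∧ r 3 4 ∧ r 5 4 ∧ ¬(r 1 2 ∧ r 3 2) ∧ ¬(r 2 3 ∧ r 4 3),
    measure_setOf_order_pattern μ fun r => r 0 1 ∧ r 2 1]
  have hratio : ((80 : ℕ) / 6 ! / ((240 : ℕ) / 6 !) : ℝ≥0∞) = 1 / 3 := by
    rw [← ENNReal.toReal_eq_toReal_iff' (by simp [ENNReal.div_eq_top]) (by simp)]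
    norm_num [ENNReal.toReal_div, Nat.factorial]
  rw [← hratio]
  congr 3 <;> rw [Nat.card_eq_fintype_card] <;> decide +kernel
end

section
/- Let μ be an atomless Borel probability measure on ℝ and μ^7 the product measure on (Fin 7 → ℝ). Let A be the event that positions 1 and 5 are local maxima and no position strictly between them (positions 2, 3, 4) is a local maximum, and let B be the event that position 1 is a local maximum (x 0 < x 1 ∧ x 2 < x 1). Then μ^7(A) / μ^7(B) = 6/35; i.e. f_m(4) = 6/35. -/
/-!
Since `μ` has no atoms, almost every `x : Fin n → ℝ` has distinct coordinates and is therefore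
sorted by exactly one permutation `σ`, i.e. lies in the cell where `x ∘ σ` is strictly increasing.
Permuting coordinates preserves the product measure, so the `n!` cells all have probability
`1 / n!`. Both events only depend on the relative order of the coordinates, so each is a union of
cells, and the quotient is `288 / 1680`, the ratio of the numbers of permutations of `Fin 7`
in them.
-/

open MeasureTheory Set Function Equiv
open scoped ENNReal Nat Finset

theorem Equiv.Perm.eq_of_forall_lt_iff_lt {α : Type*} [LinearOrder α] [WellFoundedLT α]
    {τ τ' : Perm α} (h : ∀ a b, τ a < τ b ↔ τ' a < τ' b) : τ = τ' := by
  have hmono : StrictMono (τ' ∘ τ.symm) := fun a b hab => by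
    simpa [← h] using hab
  have hrange : range (τ' ∘ τ.symm) = range id := by
    simp only [range_comp, Equiv.range_eq_univ, image_univ, range_id]
  have hid := (hmono.range_inj strictMono_id).1 hrange
  ext a
  simpa using (congrFun hid (τ a)).symm

theorem MeasureTheory.measurePreserving_comp_perm {ι α : Type*} [Fintype ι] [MeasurableSpace α]
    (μ : Measure α) [SigmaFinite μ] (σ : Perm ι) :
    MeasurePreserving (fun x : ι → α => x ∘ σ) (Measure.pi fun _ => μ)
      (Measure.pi fun _ => μ) := by
  convert measurePreserving_piCongrLeft (fun _ : ι => μ) σ.symm using 1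
  ext x i
  simp [MeasurableEquiv.piCongrLeft, Equiv.piCongrLeft, Equiv.piCongrLeft']

variable {n : ℕ}

def sortCell (σ : Perm (Fin n)) : Set (Fin n → ℝ) := {x | StrictMono (x ∘ σ)}

theorem measurableSet_sortCell (σ : Perm (Fin n)) : MeasurableSet (sortCell σ) :=
  measurableSet_setOfPred.2 <| Measurable.forall fun a => Measurable.forall fun b =>
    measurable_const.imp
      (measurableSet_lt (measurable_pi_apply (σ a)) (measurable_pi_apply (σ b))).mem

theorem lt_iff_lt_of_mem_sortCell {x : Fin n → ℝ} {σ : Perm (Fin n)} (hx : x ∈ sortCell σ)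
    (a b : Fin n) : x a < x b ↔ σ⁻¹ a < σ⁻¹ b := by
  simpa using (hx : StrictMono (x ∘ σ)).lt_iff_lt (a := σ⁻¹ a) (b := σ⁻¹ b)

theorem eq_of_mem_sortCell {x : Fin n → ℝ} {σ σ' : Perm (Fin n)} (h : x ∈ sortCell σ)
    (h' : x ∈ sortCell σ') : σ = σ' :=
  inv_inj.1 <| Perm.eq_of_forall_lt_iff_lt fun a b =>
    (lt_iff_lt_of_mem_sortCell h a b).symm.trans (lt_iff_lt_of_mem_sortCell h' a b)

theorem pairwise_disjoint_sortCell : Pairwise (Disjoint on sortCell (n := n)) :=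
  fun _ _ hne => disjoint_left.2 fun _ h h' => hne (eq_of_mem_sortCell h h')

theorem mem_sortCell_sort {x : Fin n → ℝ} (hx : Injective x) : x ∈ sortCell (Tuple.sort x) :=
  (Tuple.monotone_sort x).strictMono_of_injective (hx.comp (Tuple.sort x).injective)

variable (μ : Measure ℝ)

theorem measure_pi_setOf_apply_eq_apply_eq_zero [SigmaFinite μ] [NullSingletonClass μ]
    {i j : Fin n} (hij : i ≠ j) : Measure.pi (fun _ => μ) {x : Fin n → ℝ | x i = x j} = 0 := by
  cases n with
  | zero => exact i.elim0
  | succ n =>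
  obtain ⟨k, rfl⟩ := Fin.exists_succAbove_eq hij.symm
  have hS : MeasurableSet {x : Fin (n + 1) → ℝ | x i = x (i.succAbove k)} :=
    measurableSet_eq_fun (measurable_pi_apply _) (measurable_pi_apply _)
  have hmp := (measurePreserving_piFinSuccAbove (fun _ => μ) i).symm
  rw [← hmp.measure_preimage hS.nullMeasurableSet,
    Measure.measure_prod_null (hS.preimage hmp.measurable)]
  refine .of_forall fun a => ?_
  simpa [eq_comm] using Measure.pi_hyperplane (fun _ => μ) k a

theorem ae_injective_pi [SigmaFinite μ] [NullSingletonClass μ] :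
    ∀ᵐ x ∂Measure.pi (fun _ : Fin n => μ), Injective x := by
  have : ∀ᵐ x ∂Measure.pi (fun _ : Fin n => μ), ∀ i j, i ≠ j → x i ≠ x j := by
    simp only [ae_all_iff]
    exact fun i j hij => compl_mem_ae_iff.2 (measure_pi_setOf_apply_eq_apply_eq_zero μ hij)
  filter_upwards [this] with x hx i j hxij
  by_contra hij
  exact hx i j hij hxij

theorem measure_sortCell [IsProbabilityMeasure μ] [NullSingletonClass μ] (τ : Perm (Fin n)) :
    Measure.pi (fun _ => μ) (sortCell τ) = (n ! : ℝ≥0∞)⁻¹ := by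
  set P := Measure.pi fun _ : Fin n => μ
  have hcell (σ : Perm (Fin n)) : P (sortCell σ) = P (sortCell 1) :=
    (measurePreserving_comp_perm μ σ).measure_preimage
      (measurableSet_sortCell 1).nullMeasurableSet
  have hcover : P (⋃ σ, sortCell σ) = 1 := by
    rw [← measure_univ (μ := P)]
    refine measure_congr (ae_eq_univ.2 (measure_mono_null ?_ (ae_iff.1 (ae_injective_pi μ))))
    exact fun x hx hinj => hx (mem_iUnion.2 ⟨_, mem_sortCell_sort hinj⟩)
  rw [measure_iUnion pairwise_disjoint_sortCell measurableSet_sortCell, tsum_fintype,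
    Finset.sum_congr rfl fun σ _ => hcell σ, Finset.sum_const, Finset.card_univ,
    Fintype.card_perm, Fintype.card_fin, nsmul_eq_mul] at hcover
  rw [hcell]
  exact ENNReal.eq_inv_of_mul_eq_one_left (by rwa [mul_comm] at hcover)

theorem measure_eq_card_div_factorial [IsProbabilityMeasure μ] [NullSingletonClass μ]
    (E : Set (Fin n → ℝ)) (S : Finset (Perm (Fin n)))
    (hE : ∀ τ, ∀ x ∈ sortCell τ, x ∈ E ↔ τ ∈ S) :
    Measure.pi (fun _ => μ) E = #S / n ! := by
  have hE_ae : E =ᵐ[Measure.pi fun _ => μ] ⋃ τ ∈ S, sortCell τ := by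
    filter_upwards [ae_injective_pi μ] with x hx
    have hxτ := mem_sortCell_sort hx
    refine propext ((hE _ x hxτ).trans ⟨fun hτ => mem_biUnion hτ hxτ, fun hU => ?_⟩)
    obtain ⟨τ, hτ, hxτ'⟩ := mem_iUnion₂.1 hU
    rwa [eq_of_mem_sortCell hxτ hxτ']
  rw [measure_congr hE_ae, measure_biUnion_finset (pairwise_disjoint_sortCell.set_pairwise _)
    fun τ _ => measurableSet_sortCell τ, Finset.sum_congr rfl fun τ _ => measure_sortCell μ τ,
    Finset.sum_const, nsmul_eq_mul, div_eq_mul_inv]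

theorem measure_div_measure_eq_card_div_card [IsProbabilityMeasure μ] [NullSingletonClass μ]
    {E F : Set (Fin n → ℝ)} (S T : Finset (Perm (Fin n)))
    (hE : ∀ τ, ∀ x ∈ sortCell τ, x ∈ E ↔ τ ∈ S) (hF : ∀ τ, ∀ x ∈ sortCell τ, x ∈ F ↔ τ ∈ T) :
    Measure.pi (fun _ => μ) E / Measure.pi (fun _ => μ) F = #S / #T := by
  rw [measure_eq_card_div_factorial μ E S hE, measure_eq_card_div_factorial μ F T hF]
  exact ENNReal.mul_div_mul_right _ _ (by simp) (by simp [Nat.factorial_ne_zero])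

theorem fm_four_eq_six_thirtyfifths
    (μ : Measure ℝ) [IsProbabilityMeasure μ] [NullSingletonClass μ] :
    (Measure.pi fun _ : Fin 7 => μ)
        {x | x 0 < x 1 ∧ x 2 < x 1 ∧ x 4 < x 5 ∧ x 6 < x 5 ∧
             ¬(x 1 < x 2 ∧ x 3 < x 2) ∧ ¬(x 2 < x 3 ∧ x 4 < x 3) ∧
             ¬(x 3 < x 4 ∧ x 5 < x 4)} /
      (Measure.pi fun _ : Fin 7 => μ) {x | x 0 < x 1 ∧ x 2 < x 1} = 6 / 35 := by
  have hratio (s t : ℕ) (ht : t ≠ 0) (hst : 35 * s = t * 6) : (s : ℝ≥0∞) / t = 6 / 35 := by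
    rw [ENNReal.div_eq_div_iff (by norm_num) (by norm_num) (mod_cast ht)
      (ENNReal.natCast_ne_top t)]
    exact_mod_cast hst
  rw [measure_div_measure_eq_card_div_card μ
    {σ | σ⁻¹ 0 < σ⁻¹ 1 ∧ σ⁻¹ 2 < σ⁻¹ 1 ∧ σ⁻¹ 4 < σ⁻¹ 5 ∧ σ⁻¹ 6 < σ⁻¹ 5 ∧
      ¬(σ⁻¹ 1 < σ⁻¹ 2 ∧ σ⁻¹ 3 < σ⁻¹ 2) ∧ ¬(σ⁻¹ 2 < σ⁻¹ 3 ∧ σ⁻¹ 4 < σ⁻¹ 3) ∧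
      ¬(σ⁻¹ 3 < σ⁻¹ 4 ∧ σ⁻¹ 5 < σ⁻¹ 4)}
    {σ | σ⁻¹ 0 < σ⁻¹ 1 ∧ σ⁻¹ 2 < σ⁻¹ 1}]
  · set_option maxRecDepth 40000 in
    exact hratio _ _ (by decide) (by decide)
  all_goals
    intro σ x hx
    simp only [Finset.mem_filter, Finset.mem_univ, true_and, mem_ofPred_eq,
      lt_iff_lt_of_mem_sortCell hx]
end
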